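/- Let F > 0 and 0 < H_R < 1 with √H_R + H_R > F. Then f_{F,H_R}(H) > 0 for every H ≥ H_R, where f_{F,H_R}(H) := 2(√H_R+1)²H³ − F²H_R(H_R+√H_R+1)H + F²H_R². -/
import Mathlib


open Real

/-- The cubic `f_{F,H_R}(H) := 2(√H_R+1)²H³ − F²H_R(H_R+√H_R+1)H + F²H_R²`. -/
noncomputable def fCubic (F HR H : ℝ) : ℝ :=
  2 * (Real.sqrt HR + 1) ^ 2 * H ^ 3 - F ^ 2 * HR * (HR + Real.sqrt HR + 1) * H + F ^ 2 * HR ^ 2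

/-- In the smooth-profile regime the cubic `f_{F,H_R}` is positive on `[H_R, ∞)`. -/
theorem fCubic_pos_of_smooth (F HR : ℝ) (hF : 0 < F) (h0 : 0 < HR) (h1 : HR < 1)
    (hdom : Real.sqrt HR + HR > F) :
    ∀ H : ℝ, HR ≤ H → 0 < fCubic F HR H := by
  intro H hH
  set s := Real.sqrt HR with hs
  have hs0 : 0 < s := Real.sqrt_pos.mpr h0
  have hs2 : s ^ 2 = HR := Real.sq_sqrt h0.le
  have hs1 : s < 1 := by nlinarith [hs2, sq_nonneg (s - 1)]
  have hF2 : F ^ 2 < s ^ 2 * (s + 1) ^ 2 := by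
    have hFlt : F < s * (s + 1) := by nlinarith
    nlinarith
  have ht : 0 ≤ H - s ^ 2 := by linarith [hs2.symm ▸ hH]
  have hkey : 0 < 2 * H ^ 3 - s ^ 4 * (s ^ 2 + s + 1) * H + s ^ 6 := by
    have e : 2 * H ^ 3 - s ^ 4 * (s ^ 2 + s + 1) * H + s ^ 6 =
        s ^ 6 * (2 - s - s ^ 2) + s ^ 4 * (H - s ^ 2) * (5 - s - s ^ 2)
          + 6 * s ^ 2 * (H - s ^ 2) ^ 2 + 2 * (H - s ^ 2) ^ 3 := by ring
    rw [e]
    have p1 : 0 < s ^ 6 * (2 - s - s ^ 2) := by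
      have h2 : 0 < 2 - s - s ^ 2 := by nlinarith
      exact mul_pos (pow_pos hs0 6) h2
    have p2 : 0 ≤ s ^ 4 * (H - s ^ 2) * (5 - s - s ^ 2) := by
      apply mul_nonneg (mul_nonneg (by positivity) ht); nlinarith
    have p3 : 0 ≤ 6 * s ^ 2 * (H - s ^ 2) ^ 2 := by positivity
    have p4 : 0 ≤ 2 * (H - s ^ 2) ^ 3 := by positivity
    linarith
  have hneg : s ^ 4 - s ^ 2 * (s ^ 2 + s + 1) * H < 0 := by
    nlinarith [mul_nonneg (mul_nonneg (sq_nonneg s) (by nlinarith : (0:ℝ) ≤ s ^ 2 + s + 1)) ht,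
      pow_pos hs0 5, pow_pos hs0 6]
  unfold fCubic
  rw [← hs, ← hs2]
  nlinarith [mul_lt_mul_of_neg_right hF2 hneg, sq_nonneg (s + 1)]
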